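/- For the sequence λ_0 = 0, λ_{n+1} = (1/2)(λ_n + sqrt(λ_n^2 + 4)), one has lim_{n→∞} λ_n^2 / n = 2. -/

import Mathlib

/-!
`λ_{n+1}` is the positive root of `x² - λ_n x - 1`, so `λ_n = λ_{n+1} - 1/λ_{n+1}`, and squaring
gives `λ_{n+1}² - λ_n² = 2 - 1/λ_{n+1}²`. The increments lie in `[1, 2]`, so `λ_n² ≥ n`, hence they
tend to `2`, and `λ_n² / n → 2` by Cesàro.
-/

noncomputable def lam : ℕ → ℝ
  | 0 => 0
  | n + 1 => (lam n + Real.sqrt (lam n ^ 2 + 4)) / 2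

open Filter Topology

theorem Filter.Tendsto.div_natCast_of_tendsto_sub {u : ℕ → ℝ} {l : ℝ}
    (h : Tendsto (fun n => u (n + 1) - u n) atTop (𝓝 l)) :
    Tendsto (fun n : ℕ => u n / n) atTop (𝓝 l) := by
  have hmean : Tendsto (fun n : ℕ => (u n - u 0) / n) atTop (𝓝 l) := by
    refine h.cesaro.congr fun n => ?_
    rw [Finset.sum_range_sub, div_eq_inv_mul]
  have hconst : Tendsto (fun n : ℕ => u 0 / n) atTop (𝓝 0) :=
    tendsto_const_div_atTop_nhds_zero_nat (u 0)
  simpa [sub_div] using hmean.add hconst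

section

variable (a : ℝ)

lemma half_add_sqrt_sq_add_four_pos : 0 < (a + √(a ^ 2 + 4)) / 2 := by
  have : |a| < √(a ^ 2 + 4) := by
    rw [← Real.sqrt_sq_eq_abs]
    exact Real.sqrt_lt_sqrt (sq_nonneg a) (by linarith)
  linarith [neg_abs_le a]

lemma half_add_sqrt_sq_add_four_sub_inv :
    (a + √(a ^ 2 + 4)) / 2 - ((a + √(a ^ 2 + 4)) / 2)⁻¹ = a := by
  have hx : a + √(a ^ 2 + 4) ≠ 0 := by linarith [half_add_sqrt_sq_add_four_pos a]
  have hs : √(a ^ 2 + 4) ^ 2 = a ^ 2 + 4 := Real.sq_sqrt (by positivity)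
  field_simp
  linear_combination hs

end

lemma lam_succ_pos (n : ℕ) : 0 < lam (n + 1) :=
  half_add_sqrt_sq_add_four_pos (lam n)

lemma lam_succ_sub_inv (n : ℕ) : lam (n + 1) - (lam (n + 1))⁻¹ = lam n :=
  half_add_sqrt_sq_add_four_sub_inv (lam n)

lemma lam_nonneg : ∀ n, 0 ≤ lam n
  | 0 => le_rfl
  | n + 1 => (lam_succ_pos n).le

lemma one_le_lam_succ (n : ℕ) : 1 ≤ lam (n + 1) := by
  have hpos := lam_succ_pos n
  have h := lam_succ_sub_inv n ▸ lam_nonneg n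
  rwa [sub_nonneg, inv_le_iff_one_le_mul₀ hpos, ← sq, one_le_sq_iff₀ hpos.le] at h

lemma lam_succ_sq_sub_sq (n : ℕ) :
    lam (n + 1) ^ 2 - lam n ^ 2 = 2 - (lam (n + 1) ^ 2)⁻¹ := by
  have hx := (lam_succ_pos n).ne'
  rw [← lam_succ_sub_inv n]
  field_simp
  ring

lemma natCast_le_lam_sq (n : ℕ) : (n : ℝ) ≤ lam n ^ 2 := by
  induction n with
  | zero => simp [lam]
  | succ n ih =>
    have hstep := lam_succ_sq_sub_sq n
    have hinv : (lam (n + 1) ^ 2)⁻¹ ≤ 1 :=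
      inv_le_one_of_one_le₀ (one_le_pow₀ (one_le_lam_succ n))
    push_cast
    linarith

theorem stmt_7 :
    Filter.Tendsto (fun n : ℕ => lam n ^ 2 / n) Filter.atTop (nhds 2) := by
  refine Filter.Tendsto.div_natCast_of_tendsto_sub ?_
  have hsq : Tendsto (fun n => lam (n + 1) ^ 2) atTop atTop :=
    tendsto_atTop_mono (fun n => natCast_le_lam_sq (n + 1)) <|
      tendsto_natCast_atTop_atTop.comp (tendsto_add_atTop_nat 1)
  simpa [lam_succ_sq_sub_sq] using (tendsto_const_nhds (x := (2 : ℝ))).sub hsq.inv_tendsto_atTop
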